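/- For any distinct points x, y ∈ ℝ³, the Fefferman–de la Llave formula holds: 1/|x−y| = (1/π) ∫₀^∞ r^{−5} ∫_{ℝ³} B_{r,z}(x) B_{r,z}(y) dz dr, where B_{r,z} is the indicator function of the open ball of radius r centered at z. -/

import Mathlib

/-!
The inner integral is the volume of the lens `B(x, r) ∩ B(y, r)`. With `d = |x - y|` it vanishes
for `r ≤ d / 2` and otherwise equals `π (4r + d)(2r - d)² / 12`: by isometry invariance the lens
may be placed in `ℝ × ℝ²` with centres `0` and `(d, 0)`, where its slice at height `t` is a disc
of squared radius `r² - max(t², (t - d)²)`. Integrating `r⁻⁵` times this polynomial over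
`r > d / 2` gives `π / d`.
-/

open MeasureTheory

noncomputable def ballInd (r : ℝ) (z x : EuclideanSpace ℝ (Fin 3)) : ℝ :=
  (Metric.ball z r).indicator (fun _ => (1:ℝ)) x

open Metric Set Module

noncomputable def lensVolume (d r : ℝ) : ℝ := Real.pi * (4 * r + d) * (2 * r - d) ^ 2 / 12

theorem lensVolume_nonneg {d r : ℝ} (hd : 0 ≤ d) (hr : 0 ≤ r) : 0 ≤ lensVolume d r := by
  unfold lensVolume
  have := Real.pi_pos
  positivity

section Lens

variable {E F : Type*} [NormedAddCommGroup E] [InnerProductSpace ℝ E] [FiniteDimensional ℝ E]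
  [NormedAddCommGroup F] [InnerProductSpace ℝ F] [FiniteDimensional ℝ F]

theorem exists_linearIsometryEquiv_apply_eq (h : finrank ℝ E = finrank ℝ F) {u : E} {v : F}
    (huv : ‖u‖ = ‖v‖) : ∃ g : E ≃ₗᵢ[ℝ] F, g u = v := by
  let f := (stdOrthonormalBasis ℝ E).equiv (stdOrthonormalBasis ℝ F) (finCongr h)
  exact ⟨f.trans (ℝ ∙ (f u - v))ᗮ.reflection,
    Submodule.reflection_sub (by simpa using huv)⟩

variable [MeasurableSpace E] [BorelSpace E] [MeasurableSpace F] [BorelSpace F]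

theorem volume_ball_inter_ball_eq_zero_sub (x y : E) (r : ℝ) :
    volume (ball x r ∩ ball y r) = volume (ball 0 r ∩ ball (y - x) r) := by
  rw [← measure_preimage_add volume x]
  congr 1
  ext z
  simp [dist_eq_norm]

theorem LinearIsometryEquiv.volume_ball_inter_ball (g : E ≃ₗᵢ[ℝ] F) (x y : E) (r : ℝ) :
    volume (ball (g x) r ∩ ball (g y) r) = volume (ball x r ∩ ball y r) := by
  rw [← g.measurePreserving.measure_preimage
    (measurableSet_ball.inter measurableSet_ball).nullMeasurableSet]
  simp only [preimage_inter, LinearIsometryEquiv.preimage_ball,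
    LinearIsometryEquiv.symm_apply_apply]

theorem volume_ball_inter_ball_eq_of_dist_eq (h : finrank ℝ E = finrank ℝ F) {x y : E}
    {x' y' : F} (hd : dist x y = dist x' y') (r : ℝ) :
    volume (ball x r ∩ ball y r) = volume (ball x' r ∩ ball y' r) := by
  obtain ⟨g, hg⟩ := exists_linearIsometryEquiv_apply_eq h (u := y - x) (v := y' - x')
    (by rw [← dist_eq_norm, ← dist_eq_norm, dist_comm, hd, dist_comm])
  rw [volume_ball_inter_ball_eq_zero_sub, volume_ball_inter_ball_eq_zero_sub x', ← hg,
    ← map_zero g, g.volume_ball_inter_ball]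

end Lens

theorem lintegral_ofReal_sq_sub_max_sq {d r : ℝ} (hd : 0 ≤ d) (hr : d / 2 ≤ r) :
    ∫⁻ t, ENNReal.ofReal (r ^ 2 - max (t ^ 2) ((t - d) ^ 2)) =
      ENNReal.ofReal ((4 * r + d) * (2 * r - d) ^ 2 / 12) := by
  set s : ℝ → ℝ := fun t => r ^ 2 - max (t ^ 2) ((t - d) ^ 2)
  have hs : Continuous s := by fun_prop
  have hsupp : (fun t => ENNReal.ofReal (s t)).support ⊆ Icc (d - r) r := by
    intro t ht
    by_contra hIcc
    refine ht (ENNReal.ofReal_eq_zero.mpr ?_)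
    rw [mem_Icc, not_and_or, not_le, not_le] at hIcc
    rcases hIcc with h | h
    · nlinarith [le_max_right (t ^ 2) ((t - d) ^ 2)]
    · nlinarith [le_max_left (t ^ 2) ((t - d) ^ 2)]
  have hnonneg : ∀ t ∈ Icc (d - r) r, 0 ≤ s t := by
    rintro t ⟨h₁, h₂⟩
    exact sub_nonneg.mpr (max_le (by nlinarith) (by nlinarith))
  rw [← setLIntegral_eq_of_support_subset hsupp, ← ofReal_integral_eq_lintegral_ofReal
    (hs.integrableOn_Icc) ((ae_restrict_iff' measurableSet_Icc).mpr (ae_of_all _ hnonneg)),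
    integral_Icc_eq_integral_Ioc, ← intervalIntegral.integral_of_le (by linarith),
    ← intervalIntegral.integral_add_adjacent_intervals (b := d / 2) (hs.intervalIntegrable _ _)
    (hs.intervalIntegrable _ _)]
  have hleft :
      ∫ t in (d - r)..(d / 2), s t = ∫ t in (d - r)..(d / 2), (r ^ 2 - (t - d) ^ 2) := by
    refine intervalIntegral.integral_congr fun t ht => ?_
    rw [uIcc_of_le (by linarith)] at ht
    simp only [s, max_eq_right (by nlinarith [ht.1, ht.2] : t ^ 2 ≤ (t - d) ^ 2)]
  have hright : ∫ t in (d / 2)..r, s t = ∫ t in (d / 2)..r, (r ^ 2 - t ^ 2) := by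
    refine intervalIntegral.integral_congr fun t ht => ?_
    rw [uIcc_of_le (by linarith)] at ht
    simp only [s, max_eq_left (by nlinarith [ht.1, ht.2] : (t - d) ^ 2 ≤ t ^ 2)]
  rw [hleft, hright]
  simp only [intervalIntegral.integral_comp_sub_right (fun t => r ^ 2 - t ^ 2),
    sub_sub_cancel_left, intervalIntegrable_const, intervalIntegral.intervalIntegrable_pow,
    intervalIntegral.integral_sub, intervalIntegral.integral_const, sub_neg_eq_add, smul_eq_mul,
    integral_pow]
  ring_nf

theorem finrank_withLp_prod_euclideanSpace_fin_two :
    finrank ℝ (WithLp 2 (ℝ × EuclideanSpace ℝ (Fin 2))) = 3 := by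
  rw [(WithLp.linearEquiv 2 ℝ (ℝ × EuclideanSpace ℝ (Fin 2))).finrank_eq]
  simp

theorem volume_ball_zero_inter_ball_toLp {d r : ℝ} (hd : 0 ≤ d) (hr : d / 2 ≤ r) :
    volume (ball (0 : WithLp 2 (ℝ × EuclideanSpace ℝ (Fin 2))) r ∩
      ball (WithLp.toLp 2 (d, 0)) r) = ENNReal.ofReal (lensVolume d r) := by
  have hr0 : 0 ≤ r := by linarith
  set A : Set (ℝ × EuclideanSpace ℝ (Fin 2)) :=
    {p | p.1 ^ 2 + ‖p.2‖ ^ 2 < r ^ 2 ∧ (p.1 - d) ^ 2 + ‖p.2‖ ^ 2 < r ^ 2}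
  have hA : WithLp.toLp 2 ⁻¹' (ball 0 r ∩ ball (WithLp.toLp 2 (d, 0)) r) = A := by
    ext p
    simp only [mem_preimage, mem_inter_iff, mem_ball, dist_eq_norm, mem_ofPred_eq, A]
    rw [← sq_lt_sq₀ (norm_nonneg _) hr0, ← sq_lt_sq₀ (norm_nonneg _) hr0]
    simp [WithLp.prod_norm_sq_eq_of_L2]
  have hAm : MeasurableSet A := by
    simp only [A, ofPred_and]
    exact (measurableSet_lt (by fun_prop) (by fun_prop)).inter
      (measurableSet_lt (by fun_prop) (by fun_prop))
  have hslice (t : ℝ) : Prod.mk t ⁻¹' A = ball 0 √(r ^ 2 - max (t ^ 2) ((t - d) ^ 2)) := by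
    ext u
    simp only [mem_preimage, mem_ofPred_eq, mem_ball, dist_zero_right, A]
    rw [Real.lt_sqrt (norm_nonneg _), lt_sub_iff_add_lt', max_add, max_lt_iff]
  have hsqrt (s : ℝ) : ENNReal.ofReal √s ^ 2 = ENNReal.ofReal s := by
    rw [← ENNReal.ofReal_pow (Real.sqrt_nonneg s), Real.sq_sqrt', ENNReal.ofReal_max,
      ENNReal.ofReal_zero, max_zero]
  rw [← (WithLp.volume_preserving_toLp _ _).measure_preimage
    (measurableSet_ball.inter measurableSet_ball).nullMeasurableSet, hA, Measure.volume_eq_prod,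
    Measure.prod_apply hAm]
  simp only [hslice, EuclideanSpace.volume_ball_fin_two, hsqrt]
  rw [lintegral_mul_const _ (by fun_prop), lintegral_ofReal_sq_sub_max_sq hd hr,
    ← ENNReal.ofReal_mul (by positivity), lensVolume]
  ring_nf

section FinrankThree

variable {E : Type*} [NormedAddCommGroup E] [InnerProductSpace ℝ E] [FiniteDimensional ℝ E]
  [MeasurableSpace E] [BorelSpace E]

theorem volume_ball_inter_ball_of_finrank_eq_three (hE : finrank ℝ E = 3) {x y : E} {r : ℝ}
    (hr : dist x y / 2 ≤ r) :
    volume (ball x r ∩ ball y r) = ENNReal.ofReal (lensVolume (dist x y) r) := by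
  rw [volume_ball_inter_ball_eq_of_dist_eq
    (hE.trans finrank_withLp_prod_euclideanSpace_fin_two.symm) (x' := 0)
    (y' := WithLp.toLp 2 (dist x y, 0)) (by simp) r,
    volume_ball_zero_inter_ball_toLp dist_nonneg hr]

theorem volume_real_ball_inter_ball_eq_indicator (hE : finrank ℝ E = 3) (x y : E) (r : ℝ) :
    volume.real (ball x r ∩ ball y r) =
      (Ioi (dist x y / 2)).indicator (lensVolume (dist x y)) r := by
  by_cases hr : dist x y / 2 < r
  · have hr0 : 0 ≤ r := by linarith [dist_nonneg (x := x) (y := y)]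
    rw [indicator_of_mem (mem_Ioi.mpr hr), measureReal_def,
      volume_ball_inter_ball_of_finrank_eq_three hE hr.le,
      ENNReal.toReal_ofReal (lensVolume_nonneg dist_nonneg hr0)]
  · rw [indicator_of_notMem (mt mem_Ioi.mp hr), (ball_disjoint_ball (by linarith)).inter_eq,
      measureReal_empty]

end FinrankThree

theorem integral_Ioi_zpow_neg_five_mul_lensVolume {d : ℝ} (hd : 0 < d) :
    ∫ r in Ioi (d / 2), r ^ (-5 : ℤ) * lensVolume d r = Real.pi / d := by
  set P : ℝ → ℝ := fun u => Real.pi / 12 * (-16 * u + 6 * d * u ^ 2 - d ^ 3 / 4 * u ^ 4)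
  have hP : Continuous P := by fun_prop
  have hderiv : ∀ r ∈ Ioi (d / 2),
      HasDerivAt (fun r => P r⁻¹) (r ^ (-5 : ℤ) * lensVolume d r) r := by
    intro r hr
    have hr0 : 0 < r := lt_trans (by positivity) hr
    have hinv : HasDerivAt (fun r : ℝ => r⁻¹) (-(r ^ 2)⁻¹) r := hasDerivAt_inv hr0.ne'
    refine ((((hinv.const_mul (-16)).add ((hinv.fun_pow 2).const_mul (6 * d))).sub
      ((hinv.fun_pow 4).const_mul (d ^ 3 / 4))).const_mul (Real.pi / 12)).congr_deriv ?_
    simp only [lensVolume, zpow_neg, zpow_ofNat]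
    norm_num
    field_simp
    ring
  have hnonneg : ∀ r ∈ Ioi (d / 2), 0 ≤ r ^ (-5 : ℤ) * lensVolume d r := by
    intro r hr
    have hr0 : 0 < r := lt_trans (by positivity) hr
    exact mul_nonneg (zpow_nonneg hr0.le _) (lensVolume_nonneg hd.le hr0.le)
  have hlim : Filter.Tendsto (fun r => P r⁻¹) Filter.atTop (nhds 0) := by
    have : P 0 = 0 := by simp [P]
    exact this ▸ (hP.tendsto 0).comp tendsto_inv_atTop_zero
  have hcont : ContinuousWithinAt (fun r => P r⁻¹) (Ici (d / 2)) (d / 2) :=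
    (hP.continuousAt.comp (continuousAt_inv₀ (by positivity))).continuousWithinAt
  rw [integral_Ioi_of_hasDerivAt_of_nonneg hcont hderiv hnonneg hlim]
  simp only [P]
  field_simp
  ring

theorem integral_ballInd_mul_ballInd (r : ℝ) (x y : EuclideanSpace ℝ (Fin 3)) :
    ∫ z, ballInd r z x * ballInd r z y = volume.real (ball x r ∩ ball y r) := by
  have hswap (z w : EuclideanSpace ℝ (Fin 3)) : ballInd r z w = (ball w r).indicator 1 z := by
    simp only [ballInd, indicator, mem_ball, dist_comm w, Pi.one_apply]
  calc ∫ z, ballInd r z x * ballInd r z y = ∫ z, (ball x r ∩ ball y r).indicator 1 z := by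
        simp only [hswap, inter_indicator_one, Pi.mul_apply]
    _ = volume.real (ball x r ∩ ball y r) :=
        integral_indicator_one (measurableSet_ball.inter measurableSet_ball)

theorem fefferman_de_la_llave (x y : EuclideanSpace ℝ (Fin 3)) (hxy : x ≠ y) :
    1 / dist x y =
      (1 / Real.pi) * ∫ r in Set.Ioi (0:ℝ),
        r ^ (-5 : ℤ) * ∫ z : EuclideanSpace ℝ (Fin 3), ballInd r z x * ballInd r z y := by
  have hd : 0 < dist x y := dist_pos.mpr hxy
  have hintegrand (r : ℝ) : r ^ (-5 : ℤ) * ∫ z, ballInd r z x * ballInd r z y =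
      (Ioi (dist x y / 2)).indicator (fun r => r ^ (-5 : ℤ) * lensVolume (dist x y) r) r := by
    rw [integral_ballInd_mul_ballInd,
      volume_real_ball_inter_ball_eq_indicator finrank_euclideanSpace_fin, indicator_mul_right]
  simp_rw [hintegrand]
  rw [setIntegral_indicator measurableSet_Ioi, Ioi_inter_Ioi, max_eq_right (by positivity),
    integral_Ioi_zpow_neg_five_mul_lensVolume hd]
  field_simp
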